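/- Suppose H_0 is an r_0×n_0 binary parity check matrix of a code of covering radius 2 and minimum distance 3, with a 2-partition into p subsets, and 2^m ≥ p with m ≥ 2. Then Construction QM_3^2 with indicator set B ⊆ {*} ∪ (F_{2^m} \ {1}) and D = D_6 produces a binary linear code of length 2^m(n_0+2) − 3, codimension r_0 + 2m, minimum distance 3, and covering radius 2. -/

import Mathlib

/-!
Write a target as `(∑ j ∈ T, h j, v)` with `|T| ≤ 2` and `col` injective on `T`. If `|T| = 2`, the
two indicators differ, so the two lines `{blockCol b ξ}` span `K²` and `v` is a sum of two block
columns. If `|T| = 1`, one block column plus at most one column of `D₆` suffices; this is where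
`b ≠ 1` (that is, `b ≠ -1` in characteristic 2) is needed. If `T = ∅`, the columns of `D₆` alone
cover `K²` with radius 2, since `x ↦ x + w` permutes `K \ {0, w}`. The vector `(0, w, 0)` is
neither zero nor a column, so the covering radius is not 1.
-/

open Finset

section SumOfColumns

variable {ι ι' V W : Type*} [AddCommMonoid V] [AddCommMonoid W]

def IsSumOfAtMost (k : ℕ) (f : ι → V) (u : V) : Prop :=
  ∃ T : Finset ι, T.card ≤ k ∧ u = ∑ i ∈ T, f i

variable {k : ℕ} {f : ι → V}

theorem isSumOfAtMost_zero (f : ι → V) (k : ℕ) : IsSumOfAtMost k f 0 :=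
  ⟨∅, by simp, by simp⟩

theorem isSumOfAtMost_single (hk : 1 ≤ k) (i : ι) {u : V} (hu : u = f i) :
    IsSumOfAtMost k f u :=
  ⟨{i}, by simpa using hk, by simpa using hu⟩

theorem isSumOfAtMost_pair (hk : 2 ≤ k) {i j : ι} (hij : i ≠ j) {u : V}
    (hu : u = f i + f j) : IsSumOfAtMost k f u := by
  classical
  exact ⟨{i, j}, by rwa [card_pair hij], by rwa [sum_pair hij]⟩

theorem isSumOfAtMost_one_iff {u : V} : IsSumOfAtMost 1 f u ↔ u = 0 ∨ ∃ i, u = f i := by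
  constructor
  · rintro ⟨T, hT, rfl⟩
    rcases Nat.le_one_iff_eq_zero_or_eq_one.mp hT with hT | hT
    · simp [card_eq_zero.mp hT]
    · obtain ⟨i, rfl⟩ := card_eq_one.mp hT
      simp
  · rintro (rfl | ⟨i, rfl⟩)
    exacts [isSumOfAtMost_zero f 1, isSumOfAtMost_single le_rfl i rfl]

theorem IsSumOfAtMost.map {g : ι' → W} (e : ι ↪ ι') (φ : V →+ W) (hfg : ∀ i, g (e i) = φ (f i))
    {u : V} (hu : IsSumOfAtMost k f u) : IsSumOfAtMost k g (φ u) := by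
  obtain ⟨T, hT, rfl⟩ := hu
  exact ⟨T.map e, by simpa using hT, by simp [map_sum, hfg]⟩

end SumOfColumns

section D6

variable {G : Type*}

def d6Col [Zero G] (w : G) : (Bool × {x : G // x ≠ 0 ∧ x ≠ w}) ⊕ Unit → G × G :=
  Sum.elim (fun bx => if bx.1 then ((bx.2 : G), 0) else (0, (bx.2 : G))) fun _ => (w, w)

theorem card_subtype_ne_zero_and_ne [Zero G] [Fintype G] [DecidableEq G] {w : G} (hw : w ≠ 0) :
    Fintype.card {x : G // x ≠ 0 ∧ x ≠ w} = Fintype.card G - 2 := by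
  have : (univ.filter fun x : G => x ≠ 0 ∧ x ≠ w) = ({0, w} : Finset G)ᶜ := by
    ext x; simp
  rw [Fintype.card_subtype, this, card_compl, card_pair hw.symm]

section Zero

variable [Zero G] {w : G}

@[simp]
theorem d6Col_true (x : {x : G // x ≠ 0 ∧ x ≠ w}) : d6Col w (.inl (true, x)) = ((x : G), 0) :=
  rfl

@[simp]
theorem d6Col_false (x : {x : G // x ≠ 0 ∧ x ≠ w}) : d6Col w (.inl (false, x)) = (0, (x : G)) :=
  rfl

@[simp]
theorem d6Col_unit (u : Unit) : d6Col w (.inr u) = (w, w) :=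
  rfl

theorem d6Col_ne_zero (hw : w ≠ 0) (i) : d6Col w i ≠ 0 := by
  rcases i with ⟨_ | _, _, hx0, -⟩ | _ <;> simp_all

theorem d6Col_ne_mk_zero (hw : w ≠ 0) (i) : d6Col w i ≠ (w, 0) := by
  rcases i with ⟨_ | _, _, -, hxw⟩ | _ <;> simp_all

theorem d6Col_injective (hw : w ≠ 0) : Function.Injective (d6Col w) := by
  rintro (⟨_ | _, x, hx0, hxw⟩ | ⟨⟩) (⟨_ | _, y, hy0, hyw⟩ | ⟨⟩) h <;>
    simp_all [Prod.ext_iff, eq_comm]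

end Zero

section CharTwo

variable [Ring G] [CharP G 2] {w : G}

def addW (x : {x : G // x ≠ 0 ∧ x ≠ w}) : {x : G // x ≠ 0 ∧ x ≠ w} :=
  ⟨x + w, fun h => x.2.2 (CharTwo.add_eq_zero.mp h), fun h => x.2.1 (by simpa using h)⟩

@[simp]
theorem coe_addW (x : {x : G // x ≠ 0 ∧ x ≠ w}) : (addW x : G) = x + w :=
  rfl

theorem isSumOfAtMost_two_d6Col (hw : w ≠ 0) (x : {x : G // x ≠ 0 ∧ x ≠ w}) (v : G × G) :
    IsSumOfAtMost 2 (d6Col w) v := by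
  have hx : x ≠ addW x := fun h => hw (by simpa [Subtype.ext_iff] using h)
  have trichotomy (y : G) : y = 0 ∨ w = y ∨ ∃ t : {x : G // x ≠ 0 ∧ x ≠ w}, (t : G) = y := by
    by_cases hy0 : y = 0
    · exact .inl hy0
    by_cases hyw : y = w
    · exact .inr (.inl hyw.symm)
    · exact .inr (.inr ⟨⟨y, hy0, hyw⟩, rfl⟩)
  obtain ⟨y, z⟩ := v
  rcases trichotomy y with rfl | rfl | ⟨t, rfl⟩ <;>
    rcases trichotomy z with rfl | rfl | ⟨t', rfl⟩
  · exact isSumOfAtMost_zero _ _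
  · exact isSumOfAtMost_pair le_rfl (i := .inl (false, x)) (j := .inl (false, addW x))
      (by simpa using hx) (by simp [CharTwo.add_cancel_left])
  · exact isSumOfAtMost_single one_le_two (.inl (false, t')) (by simp)
  · exact isSumOfAtMost_pair le_rfl (i := .inl (true, x)) (j := .inl (true, addW x))
      (by simpa using hx) (by simp [CharTwo.add_cancel_left])
  · exact isSumOfAtMost_single one_le_two (.inr ()) (by simp)
  · exact isSumOfAtMost_pair le_rfl (i := .inr ()) (j := .inl (false, addW t'))
      (by simp) (by simp [add_comm, CharTwo.add_cancel_left])
  · exact isSumOfAtMost_single one_le_two (.inl (true, t)) (by simp)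
  · exact isSumOfAtMost_pair le_rfl (i := .inr ()) (j := .inl (true, addW t))
      (by simp) (by simp [add_comm, CharTwo.add_cancel_left])
  · exact isSumOfAtMost_pair le_rfl (i := .inl (true, t)) (j := .inl (false, t'))
      (by simp) (by simp)

end CharTwo

end D6

section Blocks

variable {K : Type*} [Field K]

/-- The lower `2m` rows of the columns of `A(h, b)`; `none` encodes the indicator `*`. -/
def blockCol : Option K → K → K × K
  | none, ξ => (0, ξ)
  | some b, ξ => (ξ, b * ξ)

@[simp]
theorem blockCol_none (ξ : K) : blockCol none ξ = (0, ξ) :=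
  rfl

@[simp]
theorem blockCol_some (b ξ : K) : blockCol (some b) ξ = (ξ, b * ξ) :=
  rfl

@[simp]
theorem blockCol_zero (b : Option K) : blockCol b 0 = 0 := by
  cases b <;> simp

theorem blockCol_injective (b : Option K) : Function.Injective (blockCol b) := by
  cases b
  · exact fun ξ ξ' h => congrArg Prod.snd h
  · exact fun ξ ξ' h => congrArg Prod.fst h

theorem exists_blockCol_add_blockCol {b b' : Option K} (hbb : b ≠ b') (v : K × K) :
    ∃ ξ ξ', v = blockCol b ξ + blockCol b' ξ' := by
  obtain ⟨y, z⟩ := v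
  rcases b with _ | d <;> rcases b' with _ | e
  · exact absurd rfl hbb
  · exact ⟨z - e * y, y, by simp⟩
  · exact ⟨y, z - d * y, by simp⟩
  · have hde : e - d ≠ 0 := sub_ne_zero.mpr fun h => hbb (by rw [h])
    refine ⟨y - (z - d * y) / (e - d), (z - d * y) / (e - d), ?_⟩
    simp only [blockCol_some, Prod.mk_add_mk, Prod.mk.injEq, sub_add_cancel, true_and]
    field_simp
    ring

theorem exists_blockCol_add_d6Col {b : Option K} (hb : b ≠ some (-1)) {w : K} (hw : w ≠ 0)
    (v : K × K) : ∃ ξ, v = blockCol b ξ ∨ ∃ i, v = blockCol b ξ + d6Col w i := by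
  obtain ⟨y, z⟩ := v
  rcases b with _ | c
  · by_cases hy0 : y = 0
    · exact ⟨z, .inl (by simp [hy0])⟩
    by_cases hyw : y = w
    · exact ⟨z - w, .inr ⟨.inr (), by simp [hyw]⟩⟩
    · exact ⟨z, .inr ⟨.inl (true, ⟨y, hy0, hyw⟩), by simp⟩⟩
  by_cases hz0 : z - c * y = 0
  · exact ⟨y, .inl (by simp; linear_combination hz0)⟩
  rcases ne_or_eq (z - c * y) w with hzw | hzw
  · exact ⟨y, .inr ⟨.inl (false, ⟨z - c * y, hz0, hzw⟩), by simp⟩⟩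
  by_cases hc0 : c = 0
  · exact ⟨y - w, .inr ⟨.inr (), by simp_all⟩⟩
  have ht0 : y - z / c ≠ 0 := fun h => hz0 (by field_simp at h; linear_combination -h)
  have htw : y - z / c ≠ w := by
    intro h
    have : (c + 1) * w = 0 := by
      field_simp at h
      linear_combination -h - hzw
    exact hb (by rw [eq_neg_of_add_eq_zero_left ((mul_eq_zero.mp this).resolve_right hw)])
  exact ⟨z / c, .inr ⟨.inl (true, ⟨y - z / c, ht0, htw⟩), by simp; field_simp⟩⟩

end Blocks

section Construction

variable {ι₀ A K : Type*} [AddCommMonoid A] [Field K] {h : ι₀ → A} {β : ι₀ → Option K} {w : K}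

def qmCol (h : ι₀ → A) (β : ι₀ → Option K) (w : K) :
    (ι₀ × K) ⊕ ((Bool × {x : K // x ≠ 0 ∧ x ≠ w}) ⊕ Unit) → A × K × K :=
  Sum.elim (fun jx => (h jx.1, blockCol (β jx.1) jx.2)) fun i => (0, d6Col w i)

@[simp]
theorem qmCol_inl (j : ι₀) (ξ : K) : qmCol h β w (.inl (j, ξ)) = (h j, blockCol (β j) ξ) :=
  rfl

@[simp]
theorem qmCol_inr (i : (Bool × {x : K // x ≠ 0 ∧ x ≠ w}) ⊕ Unit) :
    qmCol h β w (.inr i) = (0, d6Col w i) :=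
  rfl

theorem qmCol_ne_zero (hh0 : ∀ j, h j ≠ 0) (hw : w ≠ 0) (i) : qmCol h β w i ≠ 0 := by
  rcases i with ⟨j, ξ⟩ | i
  · exact fun e => hh0 j (congrArg Prod.fst e)
  · exact fun e => d6Col_ne_zero hw i (congrArg Prod.snd e)

theorem qmCol_injective (hh : Function.Injective h) (hh0 : ∀ j, h j ≠ 0) (hw : w ≠ 0) :
    Function.Injective (qmCol h β w) := by
  rintro (⟨j, ξ⟩ | i) (⟨j', ξ'⟩ | i') e <;> simp only [qmCol_inl, qmCol_inr, Prod.mk.injEq] at e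
  · obtain rfl := hh e.1
    rw [blockCol_injective _ e.2]
  · exact absurd e.1 (hh0 j)
  · exact absurd e.1.symm (hh0 j')
  · rw [d6Col_injective hw e.2]

theorem exists_qmCol_add_add_eq_zero
    (hdep : ∃ a b c : ι₀, a ≠ b ∧ a ≠ c ∧ b ≠ c ∧ h a + h b + h c = 0) :
    ∃ i j k, i ≠ j ∧ i ≠ k ∧ j ≠ k ∧ qmCol h β w i + qmCol h β w j + qmCol h β w k = 0 := by
  obtain ⟨a, b, c, hab, hac, hbc, habc⟩ := hdep
  exact ⟨.inl (a, 0), .inl (b, 0), .inl (c, 0), by simpa, by simpa, by simpa,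
    by simp [habc]⟩

theorem not_forall_isSumOfAtMost_one_qmCol (hh0 : ∀ j, h j ≠ 0) (hw : w ≠ 0) :
    ¬∀ u, IsSumOfAtMost 1 (qmCol h β w) u := by
  intro hall
  rcases isSumOfAtMost_one_iff.mp (hall (0, w, 0)) with hu | ⟨⟨j, ξ⟩ | i, hu⟩
  · exact hw (congrArg (·.2.1) hu)
  · exact hh0 j (congrArg Prod.fst hu).symm
  · exact d6Col_ne_mk_zero hw i (congrArg Prod.snd hu).symm

theorem isSumOfAtMost_two_qmCol [CharP K 2] (hw : w ≠ 0) (x : {x : K // x ≠ 0 ∧ x ≠ w})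
    (hβ1 : ∀ j, β j ≠ some 1) {T : Finset ι₀} (hT : T.card ≤ 2) (hβT : Set.InjOn β T)
    (v : K × K) : IsSumOfAtMost 2 (qmCol h β w) (∑ j ∈ T, h j, v) := by
  classical
  obtain hT | hT | hT : T.card = 0 ∨ T.card = 1 ∨ T.card = 2 := by omega
  · rw [card_eq_zero.mp hT, sum_empty]
    exact (isSumOfAtMost_two_d6Col hw x v).map .inr (.inr A (K × K)) fun _ => rfl
  · obtain ⟨j, rfl⟩ := card_eq_one.mp hT
    have hβj : β j ≠ some (-1) := by rw [CharTwo.neg_eq]; exact hβ1 j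
    obtain ⟨ξ, hv | ⟨i, hv⟩⟩ := exists_blockCol_add_d6Col hβj hw v
    · exact isSumOfAtMost_single one_le_two (.inl (j, ξ)) (by simp [hv])
    · exact isSumOfAtMost_pair le_rfl (i := .inl (j, ξ)) (j := .inr i) (by simp) (by simp [hv])
  · obtain ⟨a, c, hac, rfl⟩ := card_eq_two.mp hT
    have hβac : β a ≠ β c := fun e => hac (hβT (by simp) (by simp) e)
    obtain ⟨ξ, ξ', hv⟩ := exists_blockCol_add_blockCol hβac v
    exact isSumOfAtMost_pair le_rfl (i := .inl (a, ξ)) (j := .inl (c, ξ')) (by simp [hac])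
      (by simp [sum_pair hac, hv])

end Construction

theorem QM3_2_construction_general
    (r0 n0 p m : ℕ) (hm : 2 ≤ m)
    (K : Type) [Field K] [Fintype K] [DecidableEq K] (hK : Fintype.card K = 2 ^ m)
    (h : Fin n0 → (Fin r0 → ZMod 2))
    (hh0 : ∀ j, h j ≠ 0) (hhinj : Function.Injective h)
    (hdep : ∃ a b c : Fin n0, a ≠ b ∧ a ≠ c ∧ b ≠ c ∧ h a + h b + h c = 0)
    (col : Fin n0 → Fin p)
    (hcov : ∀ s : Fin r0 → ZMod 2, ∃ T : Finset (Fin n0),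
        T.card ≤ 2 ∧ Set.InjOn col ↑T ∧ s = ∑ j ∈ T, h j)
    (β : Fin n0 → Option K) (hβ1 : ∀ j, β j ≠ some 1)
    (hβ : ∀ i j, col i ≠ col j → β i ≠ β j)
    (w : K) (hw : w ≠ 0) :
    let V := (Fin r0 → ZMod 2) × K × K
    let ι := (Fin n0 × K) ⊕ ((Bool × {x : K // x ≠ 0 ∧ x ≠ w}) ⊕ Unit)
    let Hcol : ι → V := Sum.elim
      (fun jx : Fin n0 × K =>
        (β jx.1).elim (h jx.1, (0 : K), jx.2) (fun b => (h jx.1, jx.2, b * jx.2)))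
      (Sum.elim
        (fun bx : Bool × {x : K // x ≠ 0 ∧ x ≠ w} =>
          if bx.1 then ((0 : Fin r0 → ZMod 2), (bx.2 : K), (0 : K))
          else ((0 : Fin r0 → ZMod 2), (0 : K), (bx.2 : K)))
        (fun _ : Unit => ((0 : Fin r0 → ZMod 2), w, w)))
    Fintype.card ι = 2 ^ m * (n0 + 2) - 3 ∧
    (∀ i, Hcol i ≠ 0) ∧
    Function.Injective Hcol ∧
    (∃ i j k : ι, i ≠ j ∧ i ≠ k ∧ j ≠ k ∧ Hcol i + Hcol j + Hcol k = 0) ∧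
    (∀ u : V, ∃ T : Finset ι, T.card ≤ 2 ∧ u = ∑ i ∈ T, Hcol i) ∧
    ¬(∀ u : V, ∃ T : Finset ι, T.card ≤ 1 ∧ u = ∑ i ∈ T, Hcol i) := by
  intro V ι Hcol
  have hHcol : Hcol = qmCol h β w := by
    funext i
    rcases i with ⟨j, ξ⟩ | ⟨_ | _, _⟩ | _
    · simp only [Hcol, Sum.elim_inl, qmCol_inl]
      cases β j <;> rfl
    all_goals rfl
  have : CharP K 2 := charP_of_card_eq_prime_pow hK
  have h4 : 4 ≤ 2 ^ m := le_trans (by norm_num) (Nat.pow_le_pow_right two_pos hm)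
  have hcardS := card_subtype_ne_zero_and_ne hw (G := K)
  obtain ⟨x⟩ : Nonempty {x : K // x ≠ 0 ∧ x ≠ w} := Fintype.card_pos_iff.mp (by omega)
  rw [hHcol]
  refine ⟨?_, qmCol_ne_zero hh0 hw, qmCol_injective hhinj hh0 hw,
    exists_qmCol_add_add_eq_zero hdep, ?_, not_forall_isSumOfAtMost_one_qmCol hh0 hw⟩
  · simp only [ι, Fintype.card_sum, Fintype.card_prod, Fintype.card_fin, Fintype.card_bool,
      Fintype.card_unit, hcardS, hK]
    rw [mul_add, mul_comm]
    omega
  · rintro ⟨s, v⟩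
    obtain ⟨T, hT, hcolT, rfl⟩ := hcov s
    exact isSumOfAtMost_two_qmCol hw x hβ1 hT
      (fun a ha b hb e => hcolT ha hb (not_imp_not.mp (hβ a b) e)) v

/-- Construction QM_3^2. From a binary [n₀, n₀−r₀, 3]_2 code of
covering radius 2 with a 2-partition into p parts, 2^m ≥ p, m ≥ 2, indicators in
{*} ∪ (F_{2^m} \ {1}) and D = D₆, one obtains a binary linear code of length
2^m(n₀+2) − 3, codimension r₀ + 2m, minimum distance 3 and covering radius 2. -/
theorem QM3_2_construction
    (r0 n0 p m : ℕ) (hm : 2 ≤ m)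
    (K : Type) [Field K] [Fintype K] [DecidableEq K] (hK : Fintype.card K = 2 ^ m)
    (h : Fin n0 → (Fin r0 → ZMod 2))
    (hh0 : ∀ j, h j ≠ 0) (hhinj : Function.Injective h)
    (hdep : ∃ a b c : Fin n0, a ≠ b ∧ a ≠ c ∧ b ≠ c ∧ h a + h b + h c = 0)
    (col : Fin n0 → Fin p)
    (hcov : ∀ s : Fin r0 → ZMod 2, ∃ T : Finset (Fin n0),
        T.card ≤ 2 ∧ Set.InjOn col ↑T ∧ s = ∑ j ∈ T, h j)
    (hpm : p ≤ 2 ^ m)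
    (β : Fin n0 → Option K) (hβ1 : ∀ j, β j ≠ some 1)
    (hβ : ∀ i j, col i ≠ col j → β i ≠ β j)
    (w : K) (hw : w ≠ 0) :
    let V := (Fin r0 → ZMod 2) × K × K
    let ι := (Fin n0 × K) ⊕ ((Bool × {x : K // x ≠ 0 ∧ x ≠ w}) ⊕ Unit)
    let Hcol : ι → V := Sum.elim
      (fun jx : Fin n0 × K =>
        (β jx.1).elim (h jx.1, (0 : K), jx.2) (fun b => (h jx.1, jx.2, b * jx.2)))
      (Sum.elim
        (fun bx : Bool × {x : K // x ≠ 0 ∧ x ≠ w} =>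
          if bx.1 then ((0 : Fin r0 → ZMod 2), (bx.2 : K), (0 : K))
          else ((0 : Fin r0 → ZMod 2), (0 : K), (bx.2 : K)))
        (fun _ : Unit => ((0 : Fin r0 → ZMod 2), w, w)))
    Fintype.card ι = 2 ^ m * (n0 + 2) - 3 ∧
    (∀ i, Hcol i ≠ 0) ∧
    Function.Injective Hcol ∧
    (∃ i j k : ι, i ≠ j ∧ i ≠ k ∧ j ≠ k ∧ Hcol i + Hcol j + Hcol k = 0) ∧
    (∀ u : V, ∃ T : Finset ι, T.card ≤ 2 ∧ u = ∑ i ∈ T, Hcol i) ∧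
    ¬(∀ u : V, ∃ T : Finset ι, T.card ≤ 1 ∧ u = ∑ i ∈ T, Hcol i) :=
  QM3_2_construction_general r0 n0 p m hm K hK h hh0 hhinj hdep col hcov β hβ1 hβ w hw
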